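/- arXiv:1810.01731 — 10 statements merged into one kernel-verified Lean document; each statement's English description precedes it below -/
import Mathlib

section
/- Let x1, x2, x3, a1, a2, a3, b12, b13, b23, c be non-negative real numbers with x1 + x2 + x3 + a1 + a2 + a3 + b12 + b13 + b23 + c = 1, and suppose that for each permutation {i,j,k} = {1,2,3} one has b_ij ≥ 2·x_i, b_ij ≥ 2·x_j, and b_ij ≥ (1/2)·x_k (i.e., b23 ≥ max(2x2, 2x3, x1/2), b13 ≥ max(2x1, 2x3, x2/2), b12 ≥ max(2x1, 2x2, x3/2)). Then there exist q1, q2, q3 ∈ [0,1] with q1 + q2 + q3 = 2 such that q1·(b23 + x2 + x3) + q1²·(a2 + a3) + q1³·c ≤ 8/27, q2·(b13 + x1 + x3) + q2²·(a1 + a3) + q2³·c ≤ 8/27, and q3·(b12 + x1 + x2) + q3²·(a1 + a2) + q3³·c ≤ 8/27. -/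
/-!
Write `f_i` for the three cubics. For `q_i ∈ [0,1]` with `q_1 + q_2 + q_3 = 2` one has
`∑ (1 - q_i) f_i(q_i) ≤ 8/27`: after homogenising `8/27` with the total mass this is linear in
the data, the `a`- and `c`-parts follow from `(1 - q) q² ≤ 4/27` and a cubic inequality, and the
`x`,`b`-part is a linear-programming bound checked on the extreme rays of the constraint cone.

Let `s_i` be the largest `q ∈ [0,1]` with `f_i(q) ≤ 8/27`. If `∑ s_i < 2`, then
`u_i = 1 - (1 - s_i)/(3 - ∑ s_j)` sums to `2`, satisfies `∑ (1 - u_i) = 1`, and `f_i(u_i) > 8/27`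
whenever `u_i < 1`, contradicting the estimate. Hence `∑ s_i ≥ 2`, and scaling the `s_i` down to
sum `2` works because the `f_i` are monotone.
-/

open Set

theorem one_sub_mul_self_le_quarter (q : ℝ) : (1 - q) * q ≤ 1 / 4 := by
  nlinarith [sq_nonneg (2 * q - 1)]

theorem sum_one_sub_mul_self_le {q1 q2 q3 : ℝ} (hq : q1 + q2 + q3 = 2) :
    (1 - q1) * q1 + (1 - q2) * q2 + (1 - q3) * q3 ≤ 2 / 3 := by
  nlinarith [sq_nonneg (q1 - q2), sq_nonneg (q1 - q3), sq_nonneg (q2 - q3)]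

theorem weighted_sum_one_sub_mul_self_le {q1 q2 q3 : ℝ} (hq : q1 + q2 + q3 = 2) :
    4 * ((1 - q1) * q1) + 13 * ((1 - q2) * q2 + (1 - q3) * q3) ≤ 64 / 9 := by
  obtain rfl : q1 = 2 - q2 - q3 := by linarith
  nlinarith [sq_nonneg (q2 - q3), sq_nonneg (q2 + q3 - 25 / 21)]

theorem one_sub_mul_sq_le {q : ℝ} (hq : 0 ≤ q) : (1 - q) * q ^ 2 ≤ 4 / 27 := by
  nlinarith [mul_nonneg hq (sq_nonneg (3 * q - 2))]

theorem sum_one_sub_mul_cube_le {q1 q2 q3 : ℝ} (hq1 : q1 ∈ Icc (0:ℝ) 1) (hq2 : q2 ∈ Icc (0:ℝ) 1)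
    (hq3 : q3 ∈ Icc (0:ℝ) 1) (hq : q1 + q2 + q3 = 2) :
    (1 - q1) * q1 ^ 3 + (1 - q2) * q2 ^ 3 + (1 - q3) * q3 ^ 3 ≤ 8 / 27 := by
  obtain ⟨h10, h11⟩ := hq1
  obtain ⟨h20, h21⟩ := hq2
  obtain ⟨h30, h31⟩ := hq3
  nlinarith [sq_nonneg (q1 - q2), sq_nonneg (q1 - q3), sq_nonneg (q2 - q3),
    sq_nonneg (q1 + q2 - 4 / 3), sq_nonneg (q1 + q3 - 4 / 3), sq_nonneg (q2 + q3 - 4 / 3),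
    mul_nonneg (mul_nonneg h10 h20) h30, sq_nonneg (q1 * q2 - q1 * q3),
    mul_nonneg h10 h20, mul_nonneg h10 h30, mul_nonneg h20 h30]

theorem linear_terms_le_of_sorted {q1 q2 q3 x1 x2 x3 B1 B2 B3 : ℝ} (hq : q1 + q2 + q3 = 2)
    (hx3 : 0 ≤ x3) (hx23 : x3 ≤ x2) (hx12 : x2 ≤ x1)
    (hB12 : 2 * x2 ≤ B1) (hB11 : x1 / 2 ≤ B1) (hB21 : 2 * x1 ≤ B2) (hB31 : 2 * x1 ≤ B3) :
    ((1 - q2) * q2 + (1 - q3) * q3 - 8 / 27) * x1 + ((1 - q1) * q1 + (1 - q3) * q3 - 8 / 27) * x2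
        + ((1 - q1) * q1 + (1 - q2) * q2 - 8 / 27) * x3
      ≤ (8 / 27 - (1 - q1) * q1) * B1 + (8 / 27 - (1 - q2) * q2) * B2
        + (8 / 27 - (1 - q3) * q3) * B3 := by
  -- On each of the cones `x1 ≥ 4 x2` and `x1 ≤ 4 x2, x1 - x2 ≷ 3 x3` the bound is linear in `x`;
  -- each hint is its value at an extreme ray (among `(1,0,0)`, `(4,1,0)`, `(4,1,1)`, `(1,1,0)`,
  -- `(1,1,1)`) times the corresponding coordinate of `x`.
  have hS := sum_one_sub_mul_self_le hq
  have hW := weighted_sum_one_sub_mul_self_le hq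
  set p1 := (1 - q1) * q1
  set p2 := (1 - q2) * q2
  set p3 := (1 - q3) * q3
  have hp1 : p1 ≤ 1 / 4 := one_sub_mul_self_le_quarter q1
  have hp2 : p2 ≤ 1 / 4 := one_sub_mul_self_le_quarter q2
  have hp3 : p3 ≤ 1 / 4 := one_sub_mul_self_le_quarter q3
  have hB2 := mul_le_mul_of_nonneg_left hB21 (by linarith : 0 ≤ 8 / 27 - p2)
  have hB3 := mul_le_mul_of_nonneg_left hB31 (by linarith : 0 ≤ 8 / 27 - p3)
  rcases le_total (4 * x2) x1 with hA | hA
  · have hB1 := mul_le_mul_of_nonneg_left hB11 (by linarith : 0 ≤ 8 / 27 - p1)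
    nlinarith [mul_nonneg (sub_nonneg.2 hA)
        (by linarith : (0:ℝ) ≤ 44 / 27 - 3 * (p2 + p3) - p1 / 2),
      mul_nonneg (sub_nonneg.2 hx23)
        (by linarith : (0:ℝ) ≤ 184 / 27 - (3 * p1 + 12 * p2 + 13 * p3)),
      mul_nonneg hx3 (by linarith : (0:ℝ) ≤ 64 / 9 - (4 * p1 + 13 * p2 + 13 * p3))]
  · have hB1 := mul_le_mul_of_nonneg_left hB12 (by linarith : 0 ≤ 8 / 27 - p1)
    rcases le_total (x1 - x2) (3 * x3) with hC | hC
    · nlinarith [mul_nonneg (sub_nonneg.2 hx23)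
          (by linarith : (0:ℝ) ≤ 64 / 27 - (3 * (p1 + p2 + p3) + p3)),
        mul_nonneg (sub_nonneg.2 hC) (by linarith : (0:ℝ) ≤ 2 / 3 - (p1 + p2 + p3)),
        mul_nonneg (sub_nonneg.2 hx12)
          (by linarith : (0:ℝ) ≤ 64 / 9 - (4 * p1 + 13 * p2 + 13 * p3))]
    · nlinarith [mul_nonneg (sub_nonneg.2 hA)
          (by linarith : (0:ℝ) ≤ 64 / 27 - (3 * (p1 + p2 + p3) + p3)),
        mul_nonneg (sub_nonneg.2 hC)
          (by linarith : (0:ℝ) ≤ 184 / 27 - (3 * p1 + 12 * p2 + 13 * p3)),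
        mul_nonneg hx3 (by linarith : (0:ℝ) ≤ 64 / 9 - (4 * p1 + 13 * p2 + 13 * p3))]

theorem linear_terms_le {q1 q2 q3 x1 x2 x3 B1 B2 B3 : ℝ} (hq : q1 + q2 + q3 = 2)
    (hx1 : 0 ≤ x1) (hx2 : 0 ≤ x2) (hx3 : 0 ≤ x3)
    (hB1 : max (max (2 * x2) (2 * x3)) (x1 / 2) ≤ B1)
    (hB2 : max (max (2 * x1) (2 * x3)) (x2 / 2) ≤ B2)
    (hB3 : max (max (2 * x1) (2 * x2)) (x3 / 2) ≤ B3) :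
    ((1 - q2) * q2 + (1 - q3) * q3 - 8 / 27) * x1 + ((1 - q1) * q1 + (1 - q3) * q3 - 8 / 27) * x2
        + ((1 - q1) * q1 + (1 - q2) * q2 - 8 / 27) * x3
      ≤ (8 / 27 - (1 - q1) * q1) * B1 + (8 / 27 - (1 - q2) * q2) * B2
        + (8 / 27 - (1 - q3) * q3) * B3 := by
  simp only [max_le_iff] at hB1 hB2 hB3
  obtain ⟨⟨hB12, hB13⟩, hB11⟩ := hB1
  obtain ⟨⟨hB21, hB23⟩, hB22⟩ := hB2
  obtain ⟨⟨hB31, hB32⟩, hB33⟩ := hB3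
  rcases le_total x1 x2 with h12 | h12 <;> rcases le_total x2 x3 with h23 | h23 <;>
    rcases le_total x1 x3 with h13 | h13 <;>
  -- in each ordering of the `x_i`, the sorted case for the matching permutation applies
  first
  | linarith [linear_terms_le_of_sorted (q1 := q1) (q2 := q2) (q3 := q3) (by linarith)
      hx3 h23 h12 hB12 hB11 hB21 hB31]
  | linarith [linear_terms_le_of_sorted (q1 := q1) (q2 := q3) (q3 := q2) (by linarith)
      hx2 h23 h13 hB13 hB11 hB31 hB21]
  | linarith [linear_terms_le_of_sorted (q1 := q2) (q2 := q1) (q3 := q3) (by linarith)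
      hx3 h13 h12 hB21 hB22 hB12 hB32]
  | linarith [linear_terms_le_of_sorted (q1 := q2) (q2 := q3) (q3 := q1) (by linarith)
      hx1 h13 h23 hB23 hB22 hB32 hB12]
  | linarith [linear_terms_le_of_sorted (q1 := q3) (q2 := q1) (q3 := q2) (by linarith)
      hx2 h12 h13 hB31 hB33 hB13 hB23]
  | linarith [linear_terms_le_of_sorted (q1 := q3) (q2 := q2) (q3 := q1) (by linarith)
      hx1 h12 h23 hB32 hB33 hB23 hB13]

theorem exists_isGreatest_le {f : ℝ → ℝ} {K : ℝ} (hf : ContinuousOn f (Icc 0 1)) (h0 : f 0 ≤ K) :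
    ∃ s, IsGreatest {q ∈ Icc 0 1 | f q ≤ K} s := by
  have hclosed : IsClosed {q ∈ Icc (0:ℝ) 1 | f q ≤ K} :=
    hf.preimage_isClosed_of_isClosed isClosed_Icc isClosed_Iic
  exact (isCompact_Icc.of_isClosed_subset hclosed fun q hq => hq.1).exists_isGreatest
    ⟨0, ⟨le_rfl, zero_le_one⟩, h0⟩

theorem one_sub_mul_lt_of_isGreatest {f : ℝ → ℝ} {K s D : ℝ}
    (hs : IsGreatest {q ∈ Icc 0 1 | f q ≤ K} s) (hs1 : s < 1) (hD : 1 < D) :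
    (1 - s) / D * K < (1 - s) / D * f (1 - (1 - s) / D) := by
  have hpos : 0 < (1 - s) / D := div_pos (by linarith) (by linarith)
  have hlt : (1 - s) / D < 1 - s := div_lt_self (by linarith) hD
  refine mul_lt_mul_of_pos_left (not_le.1 fun hle => ?_) hpos
  have := hs.2 ⟨⟨by linarith [hs.1.1.1], by linarith⟩, hle⟩
  linarith

theorem one_sub_mul_le_of_isGreatest {f : ℝ → ℝ} {K s D : ℝ}
    (hs : IsGreatest {q ∈ Icc 0 1 | f q ≤ K} s) (hD : 1 < D) :
    (1 - s) / D * K ≤ (1 - s) / D * f (1 - (1 - s) / D) := by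
  rcases hs.1.1.2.lt_or_eq with hs1 | rfl
  · exact (one_sub_mul_lt_of_isGreatest hs hs1 hD).le
  · simp

theorem one_sub_div_mem_Icc {s D : ℝ} (hs : s ∈ Icc (0:ℝ) 1) (hD : 1 ≤ D) :
    1 - (1 - s) / D ∈ Icc (0:ℝ) 1 := by
  have h1 : (1 - s) / D ≤ 1 - s := div_le_self (by linarith [hs.2]) hD
  have h0 : 0 ≤ (1 - s) / D := div_nonneg (by linarith [hs.2]) (by linarith)
  constructor <;> linarith [hs.1]

theorem two_le_add_add_of_isGreatest {f g h : ℝ → ℝ} {K s1 s2 s3 : ℝ}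
    (hs1 : IsGreatest {q ∈ Icc 0 1 | f q ≤ K} s1) (hs2 : IsGreatest {q ∈ Icc 0 1 | g q ≤ K} s2)
    (hs3 : IsGreatest {q ∈ Icc 0 1 | h q ≤ K} s3)
    (H : ∀ u1 ∈ Icc (0:ℝ) 1, ∀ u2 ∈ Icc (0:ℝ) 1, ∀ u3 ∈ Icc (0:ℝ) 1, u1 + u2 + u3 = 2 →
      (1 - u1) * f u1 + (1 - u2) * g u2 + (1 - u3) * h u3 ≤ K) :
    2 ≤ s1 + s2 + s3 := by
  by_contra! hlt
  set D := 3 - (s1 + s2 + s3)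
  have hD : 1 < D := by linarith
  have hweights : (1 - s1) / D + (1 - s2) / D + (1 - s3) / D = 1 := by
    field_simp; ring
  have hK : (1 - s1) / D * K + (1 - s2) / D * K + (1 - s3) / D * K = K := by
    rw [← add_mul, ← add_mul, hweights, one_mul]
  have hH := H _ (one_sub_div_mem_Icc hs1.1.1 hD.le) _ (one_sub_div_mem_Icc hs2.1.1 hD.le)
    _ (one_sub_div_mem_Icc hs3.1.1 hD.le) (by linarith)
  simp only [sub_sub_cancel] at hH
  have h1 := one_sub_mul_le_of_isGreatest hs1 hD
  have h2 := one_sub_mul_le_of_isGreatest hs2 hD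
  have h3 := one_sub_mul_le_of_isGreatest hs3 hD
  have hsome : s1 < 1 ∨ s2 < 1 ∨ s3 < 1 := by
    by_contra! h; linarith
  rcases hsome with h | h | h
  · linarith [one_sub_mul_lt_of_isGreatest hs1 h hD]
  · linarith [one_sub_mul_lt_of_isGreatest hs2 h hD]
  · linarith [one_sub_mul_lt_of_isGreatest hs3 h hD]

theorem exists_sum_eq_two_of_weighted_sum_le {f g h : ℝ → ℝ} {K : ℝ}
    (hfc : ContinuousOn f (Icc 0 1)) (hgc : ContinuousOn g (Icc 0 1))
    (hhc : ContinuousOn h (Icc 0 1)) (hfm : MonotoneOn f (Icc 0 1))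
    (hgm : MonotoneOn g (Icc 0 1)) (hhm : MonotoneOn h (Icc 0 1))
    (H : ∀ u1 ∈ Icc (0:ℝ) 1, ∀ u2 ∈ Icc (0:ℝ) 1, ∀ u3 ∈ Icc (0:ℝ) 1, u1 + u2 + u3 = 2 →
      (1 - u1) * f u1 + (1 - u2) * g u2 + (1 - u3) * h u3 ≤ K) :
    ∃ q1 q2 q3 : ℝ, q1 ∈ Icc (0:ℝ) 1 ∧ q2 ∈ Icc (0:ℝ) 1 ∧ q3 ∈ Icc (0:ℝ) 1 ∧
      q1 + q2 + q3 = 2 ∧ f q1 ≤ K ∧ g q2 ≤ K ∧ h q3 ≤ K := by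
  have hI0 : (0:ℝ) ∈ Icc 0 1 := ⟨le_rfl, zero_le_one⟩
  have hI1 : (1:ℝ) ∈ Icc 0 1 := ⟨zero_le_one, le_rfl⟩
  obtain ⟨s1, hs1⟩ := exists_isGreatest_le hfc (by simpa using H 0 hI0 1 hI1 1 hI1 (by norm_num))
  obtain ⟨s2, hs2⟩ := exists_isGreatest_le hgc (by simpa using H 1 hI1 0 hI0 1 hI1 (by norm_num))
  obtain ⟨s3, hs3⟩ := exists_isGreatest_le hhc (by simpa using H 1 hI1 1 hI1 0 hI0 (by norm_num))
  have hsum := two_le_add_add_of_isGreatest hs1 hs2 hs3 H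
  set r := 2 / (s1 + s2 + s3)
  have hr0 : 0 ≤ r := by positivity
  have hr1 : r ≤ 1 := (div_le_one (by linarith)).2 hsum
  have hscale : ∀ s ∈ Icc (0:ℝ) 1, s * r ∈ Icc (0:ℝ) 1 ∧ s * r ≤ s := fun s hs =>
    ⟨⟨mul_nonneg hs.1 hr0, by nlinarith [hs.1, hs.2]⟩, mul_le_of_le_one_right hs.1 hr1⟩
  obtain ⟨hq1, hq1s⟩ := hscale s1 hs1.1.1
  obtain ⟨hq2, hq2s⟩ := hscale s2 hs2.1.1
  obtain ⟨hq3, hq3s⟩ := hscale s3 hs3.1.1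
  refine ⟨s1 * r, s2 * r, s3 * r, hq1, hq2, hq3, ?_, (hfm hq1 hs1.1.1 hq1s).trans hs1.1.2,
    (hgm hq2 hs2.1.1 hq2s).trans hs2.1.2, (hhm hq3 hs3.1.1 hq3s).trans hs3.1.2⟩
  rw [← add_mul, ← add_mul]
  exact mul_div_cancel₀ 2 (by linarith)

theorem weighted_load_sum_le {x1 x2 x3 a1 a2 a3 b12 b13 b23 c q1 q2 q3 : ℝ}
    (hx1 : 0 ≤ x1) (hx2 : 0 ≤ x2) (hx3 : 0 ≤ x3)
    (ha1 : 0 ≤ a1) (ha2 : 0 ≤ a2) (ha3 : 0 ≤ a3) (hc : 0 ≤ c)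
    (hsum : x1 + x2 + x3 + a1 + a2 + a3 + b12 + b13 + b23 + c = 1)
    (h23 : max (max (2 * x2) (2 * x3)) (x1 / 2) ≤ b23)
    (h13 : max (max (2 * x1) (2 * x3)) (x2 / 2) ≤ b13)
    (h12 : max (max (2 * x1) (2 * x2)) (x3 / 2) ≤ b12)
    (hq1 : q1 ∈ Icc (0:ℝ) 1) (hq2 : q2 ∈ Icc (0:ℝ) 1) (hq3 : q3 ∈ Icc (0:ℝ) 1)
    (hq : q1 + q2 + q3 = 2) :
    (1 - q1) * (q1 * (b23 + x2 + x3) + q1 ^ 2 * (a2 + a3) + q1 ^ 3 * c)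
      + (1 - q2) * (q2 * (b13 + x1 + x3) + q2 ^ 2 * (a1 + a3) + q2 ^ 3 * c)
      + (1 - q3) * (q3 * (b12 + x1 + x2) + q3 ^ 2 * (a1 + a2) + q3 ^ 3 * c) ≤ 8 / 27 := by
  have hlin := linear_terms_le hq hx1 hx2 hx3 h23 h13 h12
  have hsq1 := one_sub_mul_sq_le hq1.1
  have hsq2 := one_sub_mul_sq_le hq2.1
  have hsq3 := one_sub_mul_sq_le hq3.1
  nlinarith [mul_le_mul_of_nonneg_left (add_le_add hsq2 hsq3) ha1,
    mul_le_mul_of_nonneg_left (add_le_add hsq1 hsq3) ha2,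
    mul_le_mul_of_nonneg_left (add_le_add hsq1 hsq2) ha3,
    mul_le_mul_of_nonneg_left (sum_one_sub_mul_cube_le hq1 hq2 hq3 hq) hc]

theorem monotoneOn_cubic {B A C : ℝ} (hB : 0 ≤ B) (hA : 0 ≤ A) (hC : 0 ≤ C) :
    MonotoneOn (fun q : ℝ => q * B + q ^ 2 * A + q ^ 3 * C) (Ici 0) := by
  intro q (hq : 0 ≤ q) q' _ hqq'
  dsimp only
  gcongr

theorem stmt_1_general (x1 x2 x3 a1 a2 a3 b12 b13 b23 c : ℝ)
    (hx1 : 0 ≤ x1) (hx2 : 0 ≤ x2) (hx3 : 0 ≤ x3)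
    (ha1 : 0 ≤ a1) (ha2 : 0 ≤ a2) (ha3 : 0 ≤ a3)
    (hc : 0 ≤ c)
    (hsum : x1 + x2 + x3 + a1 + a2 + a3 + b12 + b13 + b23 + c = 1)
    (h23 : b23 ≥ max (max (2 * x2) (2 * x3)) (x1 / 2))
    (h13 : b13 ≥ max (max (2 * x1) (2 * x3)) (x2 / 2))
    (h12 : b12 ≥ max (max (2 * x1) (2 * x2)) (x3 / 2)) :
    ∃ q1 q2 q3 : ℝ, q1 ∈ Set.Icc (0:ℝ) 1 ∧ q2 ∈ Set.Icc (0:ℝ) 1 ∧ q3 ∈ Set.Icc (0:ℝ) 1 ∧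
      q1 + q2 + q3 = 2 ∧
      q1 * (b23 + x2 + x3) + q1 ^ 2 * (a2 + a3) + q1 ^ 3 * c ≤ 8 / 27 ∧
      q2 * (b13 + x1 + x3) + q2 ^ 2 * (a1 + a3) + q2 ^ 3 * c ≤ 8 / 27 ∧
      q3 * (b12 + x1 + x2) + q3 ^ 2 * (a1 + a2) + q3 ^ 3 * c ≤ 8 / 27 := by
  have hB1 : 0 ≤ b23 + x2 + x3 := by linarith [(le_max_right _ _).trans h23]
  have hB2 : 0 ≤ b13 + x1 + x3 := by linarith [(le_max_right _ _).trans h13]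
  have hB3 : 0 ≤ b12 + x1 + x2 := by linarith [(le_max_right _ _).trans h12]
  exact exists_sum_eq_two_of_weighted_sum_le
    (f := fun q => q * (b23 + x2 + x3) + q ^ 2 * (a2 + a3) + q ^ 3 * c)
    (g := fun q => q * (b13 + x1 + x3) + q ^ 2 * (a1 + a3) + q ^ 3 * c)
    (h := fun q => q * (b12 + x1 + x2) + q ^ 2 * (a1 + a2) + q ^ 3 * c)
    (by fun_prop) (by fun_prop) (by fun_prop)
    ((monotoneOn_cubic hB1 (by positivity) hc).mono Icc_subset_Ici_self)
    ((monotoneOn_cubic hB2 (by positivity) hc).mono Icc_subset_Ici_self)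
    ((monotoneOn_cubic hB3 (by positivity) hc).mono Icc_subset_Ici_self)
    fun _ hu1 _ hu2 _ hu3 hu =>
      weighted_load_sum_le hx1 hx2 hx3 ha1 ha2 ha3 hc hsum h23 h13 h12 hu1 hu2 hu3 hu

/-- The technical lemma: under the constraints on the non-negative variables,
there exist `q1, q2, q3 ∈ [0,1]` summing to `2` satisfying the three inequalities. -/
theorem stmt_1 (x1 x2 x3 a1 a2 a3 b12 b13 b23 c : ℝ)
    (hx1 : 0 ≤ x1) (hx2 : 0 ≤ x2) (hx3 : 0 ≤ x3)
    (ha1 : 0 ≤ a1) (ha2 : 0 ≤ a2) (ha3 : 0 ≤ a3)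
    (hb12 : 0 ≤ b12) (hb13 : 0 ≤ b13) (hb23 : 0 ≤ b23) (hc : 0 ≤ c)
    (hsum : x1 + x2 + x3 + a1 + a2 + a3 + b12 + b13 + b23 + c = 1)
    (h23 : b23 ≥ max (max (2 * x2) (2 * x3)) (x1 / 2))
    (h13 : b13 ≥ max (max (2 * x1) (2 * x3)) (x2 / 2))
    (h12 : b12 ≥ max (max (2 * x1) (2 * x2)) (x3 / 2)) :
    ∃ q1 q2 q3 : ℝ, q1 ∈ Set.Icc (0:ℝ) 1 ∧ q2 ∈ Set.Icc (0:ℝ) 1 ∧ q3 ∈ Set.Icc (0:ℝ) 1 ∧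
      q1 + q2 + q3 = 2 ∧
      q1 * (b23 + x2 + x3) + q1 ^ 2 * (a2 + a3) + q1 ^ 3 * c ≤ 8 / 27 ∧
      q2 * (b13 + x1 + x3) + q2 ^ 2 * (a1 + a3) + q2 ^ 3 * c ≤ 8 / 27 ∧
      q3 * (b12 + x1 + x2) + q3 ^ 2 * (a1 + a2) + q3 ^ 3 * c ≤ 8 / 27 :=
  stmt_1_general x1 x2 x3 a1 a2 a3 b12 b13 b23 c hx1 hx2 hx3 ha1 ha2 ha3 hc hsum h23 h13 h12
end

section
/- There do not exist real numbers q2, q3 ∈ [0,1] with q2 + q3 = 1 and non-negative real numbers x1, x2, x3, a1, a2, a3, b12, b13, b23, c with x1 + x2 + x3 + a1 + a2 + a3 + b12 + b13 + b23 + c = 1, satisfying b23 ≥ max(2x2, 2x3, x1/2), b13 ≥ max(2x1, 2x3, x2/2), b12 ≥ max(2x1, 2x2, x3/2), such that both q2·(b13 + x1 + x3) + q2²·(a1 + a3) + q2³·c > 8/27 and q3·(b12 + x1 + x2) + q3²·(a1 + a2) + q3³·c > 8/27. -/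
/-!
Weight the first inequality by `q3 ^ 2` and the second by `q2 ^ 2`. In the weighted sum every
variable except `b23` gets a coefficient of at most `K = 8/27 * (q2 ^ 2 + q3 ^ 2)`, once the
excess on `x1` is charged to `b23 ≥ x1 / 2`, `b13 ≥ 2 * x1` and `b12 ≥ 2 * x1`. Since the variables
sum to `1`, the weighted sum is at most `K`, whereas the two strict inequalities make it exceed `K`.
-/

lemma sq_mul_le_of_add_eq_one {p q : ℝ} (hp : 0 ≤ p) (hpq : p + q = 1) :
    p ^ 2 * q ≤ 8 / 27 * (p ^ 2 + q ^ 2) := by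
  obtain rfl : q = 1 - p := by linarith
  nlinarith [sq_nonneg (3 * p - 2), mul_nonneg hp (sq_nonneg (3 * p - 2))]

lemma mul_le_quarter_of_add_eq_one {p q : ℝ} (hpq : p + q = 1) : p * q ≤ 1 / 4 := by
  nlinarith [sq_nonneg (p - q)]

lemma four_div_27_le_of_add_eq_one {p q : ℝ} (hpq : p + q = 1) :
    4 / 27 ≤ 8 / 27 * (p ^ 2 + q ^ 2) := by
  nlinarith [sq_nonneg (p - q)]

lemma weighted_objective_le {q2 q3 x1 x2 x3 a1 a2 a3 b12 b13 b23 c : ℝ}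
    (hq2 : 0 ≤ q2) (hq3 : 0 ≤ q3) (hq : q2 + q3 = 1)
    (hx1 : 0 ≤ x1) (hx2 : 0 ≤ x2) (hx3 : 0 ≤ x3)
    (ha1 : 0 ≤ a1) (ha2 : 0 ≤ a2) (ha3 : 0 ≤ a3) (hc : 0 ≤ c)
    (hsum : x1 + x2 + x3 + a1 + a2 + a3 + b12 + b13 + b23 + c = 1)
    (hb23 : x1 / 2 ≤ b23) (hb13 : 2 * x1 ≤ b13) (hb12 : 2 * x1 ≤ b12) :
    q3 ^ 2 * (q2 * (b13 + x1 + x3) + q2 ^ 2 * (a1 + a3) + q2 ^ 3 * c) +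
      q2 ^ 2 * (q3 * (b12 + x1 + x2) + q3 ^ 2 * (a1 + a2) + q3 ^ 3 * c) ≤
      8 / 27 * (q2 ^ 2 + q3 ^ 2) := by
  set K := 8 / 27 * (q2 ^ 2 + q3 ^ 2)
  have hK : 4 / 27 ≤ K := four_div_27_le_of_add_eq_one hq
  have hpq : q2 * q3 ≤ 1 / 4 := mul_le_quarter_of_add_eq_one hq
  have hpq0 : 0 ≤ q2 * q3 := mul_nonneg hq2 hq3
  have h32 : q3 ^ 2 * q2 ≤ K :=
    (sq_mul_le_of_add_eq_one hq3 (by linarith)).trans_eq (by ring)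
  have h23 : q2 ^ 2 * q3 ≤ K := sq_mul_le_of_add_eq_one hq2 hq
  have hx : 3 * (q2 * q3) ≤ 11 / 2 * K := by linarith
  have ha : 2 * (q2 * q3) ^ 2 ≤ K := by nlinarith [mul_le_mul hpq hpq hpq0 (by norm_num)]
  have hc_coeff : q3 ^ 2 * q2 ^ 3 + q2 ^ 2 * q3 ^ 3 = (q2 * q3) ^ 2 := by
    linear_combination (q2 * q3) ^ 2 * hq
  have hx1_coeff : q3 ^ 2 * q2 + q2 ^ 2 * q3 = q2 * q3 := by
    linear_combination (q2 * q3) * hq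
  nlinarith [mul_nonneg (sub_nonneg.2 h32) (sub_nonneg.2 hb13),
    mul_nonneg (sub_nonneg.2 h23) (sub_nonneg.2 hb12),
    mul_nonneg (by linarith : (0 : ℝ) ≤ K) (sub_nonneg.2 hb23),
    mul_nonneg (sub_nonneg.2 hx) hx1, mul_nonneg (sub_nonneg.2 h23) hx2,
    mul_nonneg (sub_nonneg.2 h32) hx3, mul_nonneg (sub_nonneg.2 ha) ha1,
    mul_nonneg (sub_nonneg.2 ha) ha2, mul_nonneg (sub_nonneg.2 ha) ha3,
    mul_nonneg (sub_nonneg.2 ha) hc, sq_nonneg (q2 * q3)]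

/-- Nonexistence of solutions to System2. -/
theorem stmt_2 :
    ¬ ∃ (q2 q3 x1 x2 x3 a1 a2 a3 b12 b13 b23 c : ℝ),
      q2 ∈ Set.Icc (0:ℝ) 1 ∧ q3 ∈ Set.Icc (0:ℝ) 1 ∧ q2 + q3 = 1 ∧
      0 ≤ x1 ∧ 0 ≤ x2 ∧ 0 ≤ x3 ∧ 0 ≤ a1 ∧ 0 ≤ a2 ∧ 0 ≤ a3 ∧
      0 ≤ b12 ∧ 0 ≤ b13 ∧ 0 ≤ b23 ∧ 0 ≤ c ∧
      x1 + x2 + x3 + a1 + a2 + a3 + b12 + b13 + b23 + c = 1 ∧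
      b23 ≥ max (max (2 * x2) (2 * x3)) (x1 / 2) ∧
      b13 ≥ max (max (2 * x1) (2 * x3)) (x2 / 2) ∧
      b12 ≥ max (max (2 * x1) (2 * x2)) (x3 / 2) ∧
      q2 * (b13 + x1 + x3) + q2 ^ 2 * (a1 + a3) + q2 ^ 3 * c > 8 / 27 ∧
      q3 * (b12 + x1 + x2) + q3 ^ 2 * (a1 + a2) + q3 ^ 3 * c > 8 / 27 := by
  rintro ⟨q2, q3, x1, x2, x3, a1, a2, a3, b12, b13, b23, c, ⟨hq2, -⟩, ⟨hq3, -⟩, hq,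
    hx1, hx2, hx3, ha1, ha2, ha3, -, -, -, hc, hsum, hB23, hB13, hB12, h2, h3⟩
  have hle := weighted_objective_le hq2 hq3 hq hx1 hx2 hx3 ha1 ha2 ha3 hc hsum
    ((le_max_right _ _).trans hB23) ((le_max_left _ _).trans ((le_max_left _ _).trans hB13))
    ((le_max_left _ _).trans ((le_max_left _ _).trans hB12))
  rcases eq_or_ne q3 0 with rfl | hq3_ne
  · obtain rfl : q2 = 1 := by linarith
    linarith
  · nlinarith [mul_pos (pow_pos (lt_of_le_of_ne hq3 hq3_ne.symm) 2) (sub_pos.2 h2),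
      mul_nonneg (sq_nonneg q2) (sub_nonneg.2 h3.le)]
end

section
/- Let x1, b12, b13 be real numbers with b12 ≥ 2·x1, b13 ≥ 2·x1, x1 ≥ 0, b12 + b13 + (3/2)·x1 = 1, and b13 + x1 > 0 and b12 + x1 > 0. Then (8/27)·(1/(b13 + x1) + 1/(b12 + x1)) ≥ 88/81. -/
/-!
Put `a = b13 + x1` and `b = b12 + x1`. The constraints give `a, b ≥ 3 x1` and
`a + b = 1 + x1 / 2`, so `6 x1 ≤ 1 + x1 / 2`, i.e. `x1 ≤ 2 / 11`, whence `a + b ≤ 12 / 11`.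
The harmonic–arithmetic mean inequality `1/a + 1/b ≥ 4/(a + b) ≥ 11/3` then gives the bound,
with equality at `x1 = 2/11`, `a = b = 6/11`.
-/

theorem four_div_add_le_one_div_add_one_div {a b : ℝ} (ha : 0 < a) (hb : 0 < b) :
    4 / (a + b) ≤ 1 / a + 1 / b := by
  rw [div_add_div _ _ ha.ne' hb.ne', div_le_div_iff₀ (by positivity) (by positivity)]
  nlinarith [sq_nonneg (a - b)]

theorem stmt_3_general (x1 b12 b13 : ℝ)
    (h12 : b12 ≥ 2 * x1) (h13 : b13 ≥ 2 * x1)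
    (hsum : b12 + b13 + (3 / 2) * x1 = 1)
    (hpos13 : b13 + x1 > 0) (hpos12 : b12 + x1 > 0) :
    (8 / 27) * (1 / (b13 + x1) + 1 / (b12 + x1)) ≥ 88 / 81 := by
  have hsum_le : b13 + x1 + (b12 + x1) ≤ 12 / 11 := by linarith
  have hmean : 11 / 3 ≤ 4 / (b13 + x1 + (b12 + x1)) := by
    rw [le_div_iff₀ (by positivity)]
    linarith
  linarith [four_div_add_le_one_div_add_one_div hpos13 hpos12]

/-- The reduced inequality resolving System2. -/
theorem stmt_3 (x1 b12 b13 : ℝ)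
    (h12 : b12 ≥ 2 * x1) (h13 : b13 ≥ 2 * x1) (hx : 0 ≤ x1)
    (hsum : b12 + b13 + (3 / 2) * x1 = 1)
    (hpos13 : b13 + x1 > 0) (hpos12 : b12 + x1 > 0) :
    (8 / 27) * (1 / (b13 + x1) + 1 / (b12 + x1)) ≥ 88 / 81 :=
  stmt_3_general x1 b12 b13 h12 h13 hsum hpos13 hpos12
end

section
/- Let q1, q2, q3 be non-negative real numbers with q1 + q2 + q3 = 2, and let u1, u2, u3 be positive real numbers with u1 + u2 + u3 ≤ 4/3. Then it is not the case that q1·u1 > 8/27 and q2·u2 > 8/27 and q3·u3 > 8/27. -/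
open Finset

/-- Each `q i` exceeds `c / u i`, and Sedrakyan's form of Cauchy–Schwarz (AM–HM) gives
`∑ 1 / u i ≥ #s ^ 2 / ∑ u i`. -/
theorem Finset.mul_card_sq_div_sum_lt_sum {ι R : Type*} [Field R] [LinearOrder R]
    [IsStrictOrderedRing R] (s : Finset ι) (hs : s.Nonempty) {c : R} (hc : 0 ≤ c)
    {q u : ι → R} (hu : ∀ i ∈ s, 0 < u i) (hqu : ∀ i ∈ s, c < q i * u i) :
    c * #s ^ 2 / ∑ i ∈ s, u i < ∑ i ∈ s, q i :=
  calc c * #s ^ 2 / ∑ i ∈ s, u i = c * ((∑ _i ∈ s, (1 : R)) ^ 2 / ∑ i ∈ s, u i) := by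
        rw [sum_const, nsmul_one, mul_div_assoc]
    _ ≤ c * ∑ i ∈ s, 1 ^ 2 / u i :=
        mul_le_mul_of_nonneg_left (sq_sum_div_le_sum_sq_div s _ hu) hc
    _ = ∑ i ∈ s, c / u i := by simp only [one_pow, mul_sum, mul_one_div]
    _ < ∑ i ∈ s, q i := sum_lt_sum_of_nonempty hs fun i hi ↦ (div_lt_iff₀ (hu i hi)).2 (hqu i hi)

theorem stmt_6_general (q1 q2 q3 u1 u2 u3 : ℝ)
    (hq : q1 + q2 + q3 = 2)
    (hu1 : 0 < u1) (hu2 : 0 < u2) (hu3 : 0 < u3) (hu : u1 + u2 + u3 ≤ 4 / 3) :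
    ¬ (q1 * u1 > 8 / 27 ∧ q2 * u2 > 8 / 27 ∧ q3 * u3 > 8 / 27) := by
  rintro ⟨h1, h2, h3⟩
  have key := univ.mul_card_sq_div_sum_lt_sum univ_nonempty (by norm_num : (0 : ℝ) ≤ 8 / 27)
    (q := ![q1, q2, q3]) (u := ![u1, u2, u3])
    (by simp [Fin.forall_fin_succ, hu1, hu2, hu3]) (by simp [Fin.forall_fin_succ, h1, h2, h3])
  simp only [Fin.sum_univ_three, card_univ, Fintype.card_fin, Matrix.cons_val] at key
  rw [hq, div_lt_iff₀ (by positivity)] at key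
  norm_num at key
  linarith

/-- The AM–HM argument for the sub-cases with `a1 = a2 = a3 = c = 0`. -/
theorem stmt_6 (q1 q2 q3 u1 u2 u3 : ℝ)
    (hq1 : 0 ≤ q1) (hq2 : 0 ≤ q2) (hq3 : 0 ≤ q3) (hq : q1 + q2 + q3 = 2)
    (hu1 : 0 < u1) (hu2 : 0 < u2) (hu3 : 0 < u3) (hu : u1 + u2 + u3 ≤ 4 / 3) :
    ¬ (q1 * u1 > 8 / 27 ∧ q2 * u2 > 8 / 27 ∧ q3 * u3 > 8 / 27) :=
  stmt_6_general q1 q2 q3 u1 u2 u3 hq hu1 hu2 hu3 hu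
end

section
/- Let q1, q2, q3 ∈ [0,1] with q1 + q2 + q3 = 2, and let a1, a2, a3 be non-negative real numbers with a1 + a2 + a3 = 1. Then it is not the case that q1²·(a2 + a3) > 8/27 and q2²·(a1 + a3) > 8/27 and q3²·(a1 + a2) > 8/27. -/
/-! Dividing the three hypotheses by `qᵢ²` and adding them gives
`8/27 · (q₁⁻² + q₂⁻² + q₃⁻²) < (a₂ + a₃) + (a₁ + a₃) + (a₁ + a₂) = 2`, whereas Jensen's inequality
for the convex function `x ↦ x⁻²` gives `q₁⁻² + q₂⁻² + q₃⁻² ≥ 3 · ((q₁ + q₂ + q₃) / 3)⁻² = 27/4`. -/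

theorem twentySeven_div_sq_le_inv_sq_add_inv_sq_add_inv_sq {x y z : ℝ}
    (hx : 0 < x) (hy : 0 < y) (hz : 0 < z) :
    27 / (x + y + z) ^ 2 ≤ (x ^ 2)⁻¹ + (y ^ 2)⁻¹ + (z ^ 2)⁻¹ := by
  have jensen := Real.zpow_arith_mean_le_arith_mean_zpow Finset.univ (fun _ => (3 : ℝ)⁻¹)
    ![x, y, z] (by simp) (by simp) (by simp [Fin.forall_fin_succ, hx, hy, hz]) (-2)
  simp only [Fin.sum_univ_three, Matrix.cons_val, zpow_neg, zpow_ofNat, ← mul_add] at jensen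
  have mean : 27 / (x + y + z) ^ 2 = 3 * ((3⁻¹ * (x + y + z)) ^ 2)⁻¹ := by
    rw [mul_pow, mul_inv]; ring
  linarith

theorem mul_inv_lt_of_lt_mul {c p b : ℝ} (hc : 0 ≤ c) (hp : 0 ≤ p) (h : c < p * b) :
    c * p⁻¹ < b := by
  have hp' : 0 < p := hp.lt_of_ne (by rintro rfl; linarith)
  rwa [← div_eq_mul_inv, div_lt_iff₀ hp', mul_comm]

theorem stmt_7_general (q1 q2 q3 a1 a2 a3 : ℝ)
    (hq1 : q1 ∈ Set.Icc (0:ℝ) 1) (hq2 : q2 ∈ Set.Icc (0:ℝ) 1) (hq3 : q3 ∈ Set.Icc (0:ℝ) 1)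
    (hq : q1 + q2 + q3 = 2)
    (ha : a1 + a2 + a3 = 1) :
    ¬ (q1 ^ 2 * (a2 + a3) > 8 / 27 ∧ q2 ^ 2 * (a1 + a3) > 8 / 27 ∧
        q3 ^ 2 * (a1 + a2) > 8 / 27) := by
  rintro ⟨h1, h2, h3⟩
  have pos : ∀ {q b : ℝ}, 0 ≤ q → q ^ 2 * b > 8 / 27 → 0 < q := fun hq0 h =>
    hq0.lt_of_ne (by rintro rfl; norm_num at h)
  have jensen := twentySeven_div_sq_le_inv_sq_add_inv_sq_add_inv_sq
    (pos hq1.1 h1) (pos hq2.1 h2) (pos hq3.1 h3)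
  rw [hq] at jensen
  have d1 := mul_inv_lt_of_lt_mul (by norm_num) (sq_nonneg q1) h1
  have d2 := mul_inv_lt_of_lt_mul (by norm_num) (sq_nonneg q2) h2
  have d3 := mul_inv_lt_of_lt_mul (by norm_num) (sq_nonneg q3) h3
  linarith

/-- The Jensen-inequality argument for the sub-cases where only `a1, a2, a3` survive. -/
theorem stmt_7 (q1 q2 q3 a1 a2 a3 : ℝ)
    (hq1 : q1 ∈ Set.Icc (0:ℝ) 1) (hq2 : q2 ∈ Set.Icc (0:ℝ) 1) (hq3 : q3 ∈ Set.Icc (0:ℝ) 1)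
    (hq : q1 + q2 + q3 = 2)
    (ha1 : 0 ≤ a1) (ha2 : 0 ≤ a2) (ha3 : 0 ≤ a3) (ha : a1 + a2 + a3 = 1) :
    ¬ (q1 ^ 2 * (a2 + a3) > 8 / 27 ∧ q2 ^ 2 * (a1 + a3) > 8 / 27 ∧
        q3 ^ 2 * (a1 + a2) > 8 / 27) :=
  stmt_7_general q1 q2 q3 a1 a2 a3 hq1 hq2 hq3 hq ha
end

section
/- There do not exist real numbers q1, q2, q3 ∈ [0,1] with q1 + q2 + q3 = 2 and non-negative real numbers x1, x23, b13, a1, a2, a3 with b13 ≥ 2·x1 ≥ 8·x23 ≥ 0 and (7/2)·x1 + 2·x23 + b13 + a1 + a2 + a3 = 1, such that all three of the following hold: q1·((1/2)·x1 + 2·x23) + q1²·(a2 + a3) > 8/27, q2·(b13 + x1 + x23) + q2²·(a1 + a3) > 8/27, and q3·(3·x1 + x23) + q3²·(a1 + a2) > 8/27. -/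
/-!
Dividing the `i`-th inequality `qᵢ Lᵢ + qᵢ² Aᵢ > 8/27` by `qᵢ²` gives `Aᵢ + Lᵢ / qᵢ > 8 / (27 qᵢ²)`,
which is linear in `(x, b, a)`. After replacing `1/q` by a polynomial majorant `c(q)` and
`8 / (27 q²)` by a polynomial minorant `T(q)`, the sum of the three inequalities is incompatible
with the budget equation provided the sum of the `Aᵢ + cᵢ Lᵢ` is at most `T₁ + T₂ + T₃` times the
budget on every extreme ray of the cone `b13 ≥ 2 x1 ≥ 8 x23 ≥ 0`, `a ≥ 0` (`IsCertificate`).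
The near-solution `q = (2/3, 2/3, 2/3)`, `a = (1/3, 1/3, 1/3)` forces `T` to be tangent to
`8 / (27 q²)` at `2/3`. The majorant `c` is valid only for `q ≥ 1/2`, and only `q₂`
can be smaller (down to `8/27`); there the chord of `1/q` and the Taylor polynomial of
`8 / (27 q²)` at `1/2` are used instead.
-/

noncomputable def recipMajorant (q : ℝ) : ℝ := 9 / 2 * q ^ 2 - 33 / 4 * q + 5

noncomputable def thresholdMinorant (q : ℝ) : ℝ := 2 - 2 * q + 8 / 3 * (q - 2 / 3) ^ 2

noncomputable def recipMajorantLow (q : ℝ) : ℝ := 43 / 8 - 27 / 4 * q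

noncomputable def thresholdMinorantLow (q : ℝ) : ℝ :=
  32 / 9 - 128 / 27 * q + 128 / 9 * (q - 1 / 2) ^ 2

lemma one_le_mul_recipMajorant {q : ℝ} (hq : 1 / 2 ≤ q) : 1 ≤ q * recipMajorant q := by
  have h : q * recipMajorant q - 1 = (3 * q - 2) ^ 2 * (2 * q - 1) / 4 := by
    unfold recipMajorant; ring
  linarith [mul_nonneg (sq_nonneg (3 * q - 2)) (by linarith : (0 : ℝ) ≤ 2 * q - 1)]

lemma one_le_mul_recipMajorantLow {q : ℝ} (hq : 8 / 27 ≤ q) (hq' : q ≤ 1 / 2) :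
    1 ≤ q * recipMajorantLow q := by
  have h : q * recipMajorantLow q - 1 = (1 - 2 * q) * (27 * q - 8) / 8 := by
    unfold recipMajorantLow; ring
  linarith [mul_nonneg (by linarith : (0 : ℝ) ≤ 1 - 2 * q) (by linarith : (0 : ℝ) ≤ 27 * q - 8)]

lemma sq_mul_thresholdMinorant_le {q : ℝ} (hq : -1 / 4 ≤ q) (hq' : q ≤ 1) :
    q ^ 2 * thresholdMinorant q ≤ 8 / 27 := by
  have h : 8 / 27 - q ^ 2 * thresholdMinorant q
      = 2 / 27 * (3 * q - 2) ^ 2 * ((4 * q + 1) * (1 - q)) := by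
    unfold thresholdMinorant; ring
  linarith [mul_nonneg (sq_nonneg (3 * q - 2))
    (mul_nonneg (by linarith : (0 : ℝ) ≤ 4 * q + 1) (by linarith : (0 : ℝ) ≤ 1 - q))]

lemma sq_mul_thresholdMinorantLow_le {q : ℝ} (hq : -1 / 6 ≤ q) (hq' : q ≤ 1 / 2) :
    q ^ 2 * thresholdMinorantLow q ≤ 8 / 27 := by
  have h : 8 / 27 - q ^ 2 * thresholdMinorantLow q = 8 / 27 * (1 - 2 * q) ^ 3 * (1 + 6 * q) := by
    unfold thresholdMinorantLow; ring
  linarith [mul_nonneg (pow_nonneg (by linarith : (0 : ℝ) ≤ 1 - 2 * q) 3)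
    (by linarith : (0 : ℝ) ≤ 1 + 6 * q)]

lemma lt_add_mul_of_lt_mul_add_sq_mul {q L A c T K : ℝ} (hq : 0 < q) (hL : 0 ≤ L)
    (hc : 1 ≤ q * c) (hT : q ^ 2 * T ≤ K) (h : K < q * L + q ^ 2 * A) : T < A + c * L := by
  have hqL : q * L ≤ q ^ 2 * (c * L) := by
    linarith [mul_le_mul_of_nonneg_left hc (mul_nonneg hq.le hL)]
  refine lt_of_mul_lt_mul_left ?_ (sq_nonneg q)
  calc q ^ 2 * T ≤ K := hT
    _ < q * L + q ^ 2 * A := h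
    _ ≤ q ^ 2 * (c * L) + q ^ 2 * A := by gcongr
    _ = q ^ 2 * (A + c * L) := by ring

lemma mul_add_sq_mul_le_of_le {q θ L A : ℝ} (hq : 0 ≤ q) (hqθ : q ≤ θ) (hL : 0 ≤ L)
    (hA : 0 ≤ A) : q * L + q ^ 2 * A ≤ θ * L + θ ^ 2 * A := by
  gcongr

/-- The extreme rays are `aᵢ`, `b13`, `(x1, b13) = (1, 2)` and `(x23, x1, b13) = (1, 4, 8)`, of
budgets `1, 1, 11/2, 24`; on each, `Σ (Aᵢ + cᵢ Lᵢ)` is at most `T₁ + T₂ + T₃` times the budget. -/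
structure IsCertificate (c₁ c₂ c₃ T₁ T₂ T₃ : ℝ) : Prop where
  ray_a : 2 ≤ T₁ + T₂ + T₃
  ray_b13 : c₂ ≤ T₁ + T₂ + T₃
  ray_x1 : c₁ / 2 + 3 * c₂ + 3 * c₃ ≤ 11 / 2 * (T₁ + T₂ + T₃)
  ray_x23 : 4 * c₁ + 13 * c₂ + 13 * c₃ ≤ 24 * (T₁ + T₂ + T₃)

lemma IsCertificate.false {c₁ c₂ c₃ T₁ T₂ T₃ x1 x23 b13 a1 a2 a3 : ℝ}
    (hC : IsCertificate c₁ c₂ c₃ T₁ T₂ T₃) (hx23 : 0 ≤ x23) (hb13 : 2 * x1 ≤ b13)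
    (hx : 8 * x23 ≤ 2 * x1) (ha : 0 ≤ a1 + a2 + a3)
    (hbud : 7 / 2 * x1 + 2 * x23 + b13 + a1 + a2 + a3 = 1)
    (h1 : T₁ < a2 + a3 + c₁ * (1 / 2 * x1 + 2 * x23))
    (h2 : T₂ < a1 + a3 + c₂ * (b13 + x1 + x23))
    (h3 : T₃ < a1 + a2 + c₃ * (3 * x1 + x23)) : False := by
  set S := T₁ + T₂ + T₃
  have ea := mul_le_mul_of_nonneg_right hC.ray_a ha
  have eb := mul_le_mul_of_nonneg_right hC.ray_b13 (sub_nonneg.2 hb13)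
  have ex1 := mul_le_mul_of_nonneg_right hC.ray_x1 (by linarith : (0 : ℝ) ≤ x1 - 4 * x23)
  have ex23 := mul_le_mul_of_nonneg_right hC.ray_x23 hx23
  have hS : S * (7 / 2 * x1 + 2 * x23 + b13 + a1 + a2 + a3) = S := by rw [hbud, mul_one]
  linarith

lemma isCertificate_of_half_le {q₁ q₂ q₃ : ℝ} (hq : q₁ + q₂ + q₃ = 2) (hq₂ : 1 / 2 ≤ q₂)
    (hq₂' : q₂ ≤ 1) :
    IsCertificate (recipMajorant q₁) (recipMajorant q₂) (recipMajorant q₃)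
      (thresholdMinorant q₁) (thresholdMinorant q₂) (thresholdMinorant q₃) := by
  obtain rfl : q₃ = 2 - q₁ - q₂ := by linarith
  simp only [recipMajorant, thresholdMinorant]
  refine ⟨?_, ?_, ?_, ?_⟩
  · nlinarith [sq_nonneg (2 * q₁ + q₂ - 2), sq_nonneg (q₂ - 2 / 3)]
  · nlinarith [sq_nonneg (2 * q₁ + q₂ - 2), mul_nonneg (sub_nonneg.2 hq₂) (sub_nonneg.2 hq₂')]
  · nlinarith [sq_nonneg (q₁ + 2 * q₂ - 2), sq_nonneg (q₁ - 7 / 8)]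
  · nlinarith [sq_nonneg (q₁ + 2 * q₂ - 2), sq_nonneg (q₁ - 7 / 8)]

lemma isCertificate_low {q₁ q₂ q₃ : ℝ} (hq : q₁ + q₂ + q₃ = 2) :
    IsCertificate (recipMajorant q₁) (recipMajorantLow q₂) (recipMajorant q₃)
      (thresholdMinorant q₁) (thresholdMinorantLow q₂) (thresholdMinorant q₃) := by
  obtain rfl : q₃ = 2 - q₁ - q₂ := by linarith
  simp only [recipMajorant, thresholdMinorant, recipMajorantLow, thresholdMinorantLow]
  refine ⟨?_, ?_, ?_, ?_⟩
  · nlinarith [sq_nonneg (2 * q₁ + q₂ - 2), sq_nonneg (q₂ - 253 / 420)]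
  · nlinarith [sq_nonneg (2 * q₁ + q₂ - 2), sq_nonneg (q₂ - 37 / 96)]
  · nlinarith [sq_nonneg (q₁ - 3 / 4), sq_nonneg (q₂ - 1 / 2), sq_nonneg (q₁ + q₂ - 5 / 4)]
  · nlinarith [sq_nonneg (q₁ - 3 / 4), sq_nonneg (q₂ - 1 / 2), sq_nonneg (q₁ + q₂ - 5 / 4)]

/-- Nonexistence of solutions to System1b. -/
theorem stmt_9 :
    ¬ ∃ (q1 q2 q3 x1 x23 b13 a1 a2 a3 : ℝ),
      q1 ∈ Set.Icc (0:ℝ) 1 ∧ q2 ∈ Set.Icc (0:ℝ) 1 ∧ q3 ∈ Set.Icc (0:ℝ) 1 ∧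
      q1 + q2 + q3 = 2 ∧
      0 ≤ x1 ∧ 0 ≤ x23 ∧ 0 ≤ b13 ∧ 0 ≤ a1 ∧ 0 ≤ a2 ∧ 0 ≤ a3 ∧
      b13 ≥ 2 * x1 ∧ 2 * x1 ≥ 8 * x23 ∧ 8 * x23 ≥ 0 ∧
      (7 / 2) * x1 + 2 * x23 + b13 + a1 + a2 + a3 = 1 ∧
      q1 * ((1 / 2) * x1 + 2 * x23) + q1 ^ 2 * (a2 + a3) > 8 / 27 ∧
      q2 * (b13 + x1 + x23) + q2 ^ 2 * (a1 + a3) > 8 / 27 ∧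
      q3 * (3 * x1 + x23) + q3 ^ 2 * (a1 + a2) > 8 / 27 := by
  rintro ⟨q1, q2, q3, x1, x23, b13, a1, a2, a3, ⟨hq1, hq1'⟩, ⟨hq2, hq2'⟩, ⟨hq3, hq3'⟩, hq,
    hx1, hx23, -, ha1, ha2, ha3, hb13, hx, -, hbud, h1, h2, h3⟩
  have hq1h : 1 / 2 ≤ q1 := by
    by_contra! h
    linarith [mul_add_sq_mul_le_of_le hq1 h.le (by positivity : 0 ≤ 1 / 2 * x1 + 2 * x23)
      (by positivity : 0 ≤ a2 + a3)]
  have hq3h : 1 / 2 ≤ q3 := by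
    by_contra! h
    linarith [mul_add_sq_mul_le_of_le hq3 h.le (by positivity : 0 ≤ 3 * x1 + x23)
      (by positivity : 0 ≤ a1 + a2)]
  have hq2l : 8 / 27 ≤ q2 := by
    by_contra! h
    linarith [mul_add_sq_mul_le_of_le hq2 h.le (by linarith : 0 ≤ b13 + x1 + x23)
      (by positivity : 0 ≤ a1 + a3)]
  have k1 := lt_add_mul_of_lt_mul_add_sq_mul (by linarith) (by positivity)
    (one_le_mul_recipMajorant hq1h) (sq_mul_thresholdMinorant_le (by linarith) hq1') h1
  have k3 := lt_add_mul_of_lt_mul_add_sq_mul (by linarith) (by positivity)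
    (one_le_mul_recipMajorant hq3h) (sq_mul_thresholdMinorant_le (by linarith) hq3') h3
  rcases le_or_gt (1 / 2) q2 with hq2h | hq2h
  · exact (isCertificate_of_half_le hq hq2h hq2').false hx23 hb13 hx (by positivity) hbud k1
      (lt_add_mul_of_lt_mul_add_sq_mul (by linarith) (by linarith) (one_le_mul_recipMajorant hq2h)
        (sq_mul_thresholdMinorant_le (by linarith) hq2') h2) k3
  · exact (isCertificate_low hq).false hx23 hb13 hx (by positivity) hbud k1
      (lt_add_mul_of_lt_mul_add_sq_mul (by linarith) (by linarith)
        (one_le_mul_recipMajorantLow hq2l hq2h.le)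
        (sq_mul_thresholdMinorantLow_le (by linarith) hq2h.le) h2) k3
end

section
/- There do not exist real numbers q1, q2, q3 ∈ [0,1] with q1 + q2 + q3 = 2 and non-negative real numbers x2, x3, b12, a1, a2, a3 with b12 ≥ 8·x2 ≥ 8·x3 ≥ 0 and 15·x2 + x3 + b12 + a1 + a2 + a3 = 1, such that all three of the following hold: q1·(3·x2 + x3) + q1²·(a2 + a3) > 8/27, q2·(12·x2 + x3) + q2²·(a1 + a3) > 8/27, and q3·(b12 + 5·x2) + q3²·(a1 + a2) > 8/27. -/
/-!
Divide the `i`-th inequality by `qᵢ²`. Since the `aⱼ` enter with coefficient `qᵢ²`, the sum of the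
three quotients is `Σ cᵢ / qᵢ + 2 (a₁ + a₂ + a₃)`, where `cᵢ` is the linear form in `x₂, x₃, b₁₂`
multiplying `qᵢ`, and the right-hand sides add up to `M = 8/27 · Σ qᵢ⁻²`.
The left side is linear in `(x₂, x₃, b₁₂, a₁ + a₂ + a₃)`, and the constraints make this point a
convex combination, with weights `a₁ + a₂ + a₃`, `b₁₂ - 8x₂`, `24x₃`, `23(x₂ - x₃)`, of the
four vertices `(0,0,0,1)`, `(0,0,1,0)`, `(1/24,1/24,1/3,0)`, `(1/23,0,8/23,0)`. At each vertex the
left side is at most `M` as soon as `q₁ + q₂ + q₃ = 2`: the inequality is separable, and it follows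
by adding one-variable bounds `k/q ≤ c/q² + t + μq` with a common slope `μ` (a Lagrange multiplier)
whose constants satisfy `Σ t + 2μ ≤ 0`.
-/

theorem mul_inv_le_mul_inv_sq_add_of_cubic_nonneg {q k c t μ : ℝ} (hq : 0 < q)
    (h : 0 ≤ μ * q ^ 3 + t * q ^ 2 - k * q + c) : k * q⁻¹ ≤ c * q⁻¹ ^ 2 + t + μ * q := by
  have e : c * q⁻¹ ^ 2 + t + μ * q - k * q⁻¹ = (μ * q ^ 3 + t * q ^ 2 - k * q + c) * q⁻¹ ^ 2 := by
    field_simp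
    ring
  nlinarith [mul_nonneg h (sq_nonneg q⁻¹)]

theorem inv_sq_mul_lt_of_lt_mul_add_sq_mul {q m c a : ℝ} (hq : 0 < q)
    (h : m < q * c + q ^ 2 * a) : m * q⁻¹ ^ 2 < c * q⁻¹ + a := by
  have e : c * q⁻¹ + a = (q * c + q ^ 2 * a) * q⁻¹ ^ 2 := by
    field_simp
  rw [e]
  exact mul_lt_mul_of_pos_right h (by positivity)

theorem two_sub_two_mul_le_inv_sq {q : ℝ} (hq : 0 < q) : 2 - 2 * q ≤ 8 / 27 * q⁻¹ ^ 2 := by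
  have h : 0 * q⁻¹ ≤ 8 / 27 * q⁻¹ ^ 2 + -2 + 2 * q :=
    mul_inv_le_mul_inv_sq_add_of_cubic_nonneg hq
      (by nlinarith [mul_nonneg hq.le (sq_nonneg (q - 2 / 3)), sq_nonneg (q - 2 / 3)])
  linarith

section
variable {q₁ q₂ q₃ : ℝ} (hq₁ : 0 < q₁) (hq₂ : 0 < q₂) (hq₃ : 0 < q₃) (hsum : q₁ + q₂ + q₃ = 2)
include hq₁ hq₂ hq₃ hsum

theorem two_le_inv_sq_sum : 2 ≤ 8 / 27 * (q₁⁻¹ ^ 2 + q₂⁻¹ ^ 2 + q₃⁻¹ ^ 2) := by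
  linarith [two_sub_two_mul_le_inv_sq hq₁, two_sub_two_mul_le_inv_sq hq₂,
    two_sub_two_mul_le_inv_sq hq₃]

theorem inv_le_inv_sq_sum : q₃⁻¹ ≤ 8 / 27 * (q₁⁻¹ ^ 2 + q₂⁻¹ ^ 2 + q₃⁻¹ ^ 2) := by
  have h₃ : 1 * q₃⁻¹ ≤ 8 / 27 * q₃⁻¹ ^ 2 + 0 + 2 * q₃ :=
    mul_inv_le_mul_inv_sq_add_of_cubic_nonneg hq₃
      (by nlinarith [mul_nonneg hq₃.le (sq_nonneg (q₃ - 2 / 5)), sq_nonneg (q₃ - 2 / 5)])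
  linarith [two_sub_two_mul_le_inv_sq hq₁, two_sub_two_mul_le_inv_sq hq₂]

theorem four_thirteen_thirteen_le_inv_sq_sum :
    4 * q₁⁻¹ + 13 * q₂⁻¹ + 13 * q₃⁻¹ ≤ 24 * (8 / 27 * (q₁⁻¹ ^ 2 + q₂⁻¹ ^ 2 + q₃⁻¹ ^ 2)) := by
  have thirteen {q : ℝ} (hq : 0 < q) : 13 * q⁻¹ ≤ 64 / 9 * q⁻¹ ^ 2 + -13 + 25 * q :=
    mul_inv_le_mul_inv_sq_add_of_cubic_nonneg hq
      (by nlinarith [mul_nonneg hq.le (sq_nonneg (q - 5 / 8)), sq_nonneg (q - 5 / 8)])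
  have h₁ : 4 * q₁⁻¹ ≤ 64 / 9 * q₁⁻¹ ^ 2 + -26 + 25 * q₁ :=
    mul_inv_le_mul_inv_sq_add_of_cubic_nonneg hq₁
      (by nlinarith [mul_nonneg hq₁.le (sq_nonneg (q₁ - 3 / 4)), sq_nonneg (q₁ - 3 / 4)])
  linarith [thirteen hq₂, thirteen hq₃]

theorem three_twelve_thirteen_le_inv_sq_sum :
    3 * q₁⁻¹ + 12 * q₂⁻¹ + 13 * q₃⁻¹ ≤ 23 * (8 / 27 * (q₁⁻¹ ^ 2 + q₂⁻¹ ^ 2 + q₃⁻¹ ^ 2)) := by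
  have h₁ : 3 * q₁⁻¹ ≤ 184 / 27 * q₁⁻¹ ^ 2 + -26 + 25 * q₁ :=
    mul_inv_le_mul_inv_sq_add_of_cubic_nonneg hq₁
      (by nlinarith [mul_nonneg hq₁.le (sq_nonneg (q₁ - 3 / 4)), sq_nonneg (q₁ - 3 / 4)])
  have h₂ : 12 * q₂⁻¹ ≤ 184 / 27 * q₂⁻¹ ^ 2 + -13 + 25 * q₂ :=
    mul_inv_le_mul_inv_sq_add_of_cubic_nonneg hq₂
      (by nlinarith [mul_nonneg hq₂.le (sq_nonneg (q₂ - 5 / 8)), sq_nonneg (q₂ - 5 / 8)])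
  have h₃ : 13 * q₃⁻¹ ≤ 184 / 27 * q₃⁻¹ ^ 2 + -12 + 25 * q₃ :=
    mul_inv_le_mul_inv_sq_add_of_cubic_nonneg hq₃
      (by nlinarith [mul_nonneg hq₃.le (sq_nonneg (q₃ - 3 / 5)), sq_nonneg (q₃ - 3 / 5)])
  linarith

theorem weighted_sum_le_inv_sq_sum {x₂ x₃ b₁₂ a₁ a₂ a₃ : ℝ} (hx₃ : 0 ≤ x₃) (hx₃₂ : x₃ ≤ x₂)
    (hb : 8 * x₂ ≤ b₁₂) (ha₁ : 0 ≤ a₁) (ha₂ : 0 ≤ a₂) (ha₃ : 0 ≤ a₃)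
    (htot : 15 * x₂ + x₃ + b₁₂ + a₁ + a₂ + a₃ = 1) :
    (3 * x₂ + x₃) * q₁⁻¹ + (a₂ + a₃) + ((12 * x₂ + x₃) * q₂⁻¹ + (a₁ + a₃)) +
      ((b₁₂ + 5 * x₂) * q₃⁻¹ + (a₁ + a₂)) ≤ 8 / 27 * (q₁⁻¹ ^ 2 + q₂⁻¹ ^ 2 + q₃⁻¹ ^ 2) := by
  have hA := mul_le_mul_of_nonneg_left (two_le_inv_sq_sum hq₁ hq₂ hq₃ hsum)
    (by positivity : 0 ≤ a₁ + a₂ + a₃)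
  have hB := mul_le_mul_of_nonneg_left (inv_le_inv_sq_sum hq₁ hq₂ hq₃ hsum)
    (sub_nonneg.2 hb)
  have h24 := mul_le_mul_of_nonneg_left
    (four_thirteen_thirteen_le_inv_sq_sum hq₁ hq₂ hq₃ hsum) hx₃
  have h23 := mul_le_mul_of_nonneg_left
    (three_twelve_thirteen_le_inv_sq_sum hq₁ hq₂ hq₃ hsum) (sub_nonneg.2 hx₃₂)
  have hM : 8 / 27 * (q₁⁻¹ ^ 2 + q₂⁻¹ ^ 2 + q₃⁻¹ ^ 2) * (15 * x₂ + x₃ + b₁₂ + a₁ + a₂ + a₃) =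
      8 / 27 * (q₁⁻¹ ^ 2 + q₂⁻¹ ^ 2 + q₃⁻¹ ^ 2) := by
    rw [htot, mul_one]
  linarith

end

/-- Nonexistence of solutions to System1d. -/
theorem stmt_11 :
    ¬ ∃ (q1 q2 q3 x2 x3 b12 a1 a2 a3 : ℝ),
      q1 ∈ Set.Icc (0:ℝ) 1 ∧ q2 ∈ Set.Icc (0:ℝ) 1 ∧ q3 ∈ Set.Icc (0:ℝ) 1 ∧
      q1 + q2 + q3 = 2 ∧
      0 ≤ x2 ∧ 0 ≤ x3 ∧ 0 ≤ b12 ∧ 0 ≤ a1 ∧ 0 ≤ a2 ∧ 0 ≤ a3 ∧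
      b12 ≥ 8 * x2 ∧ 8 * x2 ≥ 8 * x3 ∧ 8 * x3 ≥ 0 ∧
      15 * x2 + x3 + b12 + a1 + a2 + a3 = 1 ∧
      q1 * (3 * x2 + x3) + q1 ^ 2 * (a2 + a3) > 8 / 27 ∧
      q2 * (12 * x2 + x3) + q2 ^ 2 * (a1 + a3) > 8 / 27 ∧
      q3 * (b12 + 5 * x2) + q3 ^ 2 * (a1 + a2) > 8 / 27 := by
  rintro ⟨q1, q2, q3, x2, x3, b12, a1, a2, a3, ⟨hq1₀, -⟩, ⟨hq2₀, -⟩, ⟨hq3₀, -⟩, hsum, -, hx3, -,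
    ha1, ha2, ha3, hb, hx32, -, htot, h1, h2, h3⟩
  have pos {q c a : ℝ} (hq : 0 ≤ q) (h : q * c + q ^ 2 * a > 8 / 27) : 0 < q :=
    hq.lt_of_ne (by rintro rfl; norm_num at h)
  have hq1 := pos hq1₀ h1
  have hq2 := pos hq2₀ h2
  have hq3 := pos hq3₀ h3
  have hle := weighted_sum_le_inv_sq_sum hq1 hq2 hq3 hsum hx3 (by linarith) hb ha1 ha2 ha3 htot
  linarith [inv_sq_mul_lt_of_lt_mul_add_sq_mul hq1 h1, inv_sq_mul_lt_of_lt_mul_add_sq_mul hq2 h2,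
    inv_sq_mul_lt_of_lt_mul_add_sq_mul hq3 h3]
end

section
/- Let A, a1, a2, a3 be non-negative real numbers with (9/4)·A + a1 + a2 + a3 = 1. Then 3·A + √(A² + (32/27)·(a2 + a3)) + √(A² + (32/27)·(a1 + a3)) + √(A² + (32/27)·(a1 + a2)) ≤ 8/3. -/
/-! The three radicands sum to `3 c²` with `c = 8/9 - A`, because the constraint eliminates
`a1 + a2 + a3`. Bounding each square root by the tangent line of `√` at `c²` then gives
`3 A + 3 c = 8/3`. -/

lemma Real.sqrt_le_tangent {x c : ℝ} (hx : 0 ≤ x) (hc : 0 < c) :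
    √x ≤ (x / c + c) / 2 := by
  rw [div_add' _ _ _ hc.ne', div_div, le_div_iff₀ (by positivity)]
  nlinarith [sq_nonneg (√x - c), Real.sq_sqrt hx]

lemma Real.sqrt_add_sqrt_add_sqrt_le {x y z c : ℝ} (hx : 0 ≤ x) (hy : 0 ≤ y) (hz : 0 ≤ z)
    (hc : 0 < c) (hsum : x + y + z = 3 * c ^ 2) :
    √x + √y + √z ≤ 3 * c := by
  have hx' := Real.sqrt_le_tangent hx hc
  have hy' := Real.sqrt_le_tangent hy hc
  have hz' := Real.sqrt_le_tangent hz hc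
  have htangents : (x / c + c) / 2 + (y / c + c) / 2 + (z / c + c) / 2 = 3 * c := by
    field_simp
    linear_combination hsum
  linarith

theorem stmt_16_general (A a1 a2 a3 : ℝ)
    (ha1 : 0 ≤ a1) (ha2 : 0 ≤ a2) (ha3 : 0 ≤ a3)
    (hsum : (9 / 4) * A + a1 + a2 + a3 = 1) :
    3 * A + Real.sqrt (A ^ 2 + (32 / 27) * (a2 + a3)) +
      Real.sqrt (A ^ 2 + (32 / 27) * (a1 + a3)) +
      Real.sqrt (A ^ 2 + (32 / 27) * (a1 + a2)) ≤ 8 / 3 := by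
  have hc : 0 < 8 / 9 - A := by linarith
  have hradicands : (A ^ 2 + 32 / 27 * (a2 + a3)) + (A ^ 2 + 32 / 27 * (a1 + a3)) +
      (A ^ 2 + 32 / 27 * (a1 + a2)) = 3 * (8 / 9 - A) ^ 2 := by
    linear_combination (64 / 27) * hsum
  have := Real.sqrt_add_sqrt_add_sqrt_le (by positivity) (by positivity) (by positivity) hc
    hradicands
  linarith

/-- The boundary-case inequality in the case `A = B = C`. -/
theorem stmt_16 (A a1 a2 a3 : ℝ)
    (hA : 0 ≤ A) (ha1 : 0 ≤ a1) (ha2 : 0 ≤ a2) (ha3 : 0 ≤ a3)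
    (hsum : (9 / 4) * A + a1 + a2 + a3 = 1) :
    3 * A + Real.sqrt (A ^ 2 + (32 / 27) * (a2 + a3)) +
      Real.sqrt (A ^ 2 + (32 / 27) * (a1 + a3)) +
      Real.sqrt (A ^ 2 + (32 / 27) * (a1 + a2)) ≤ 8 / 3 :=
  stmt_16_general A a1 a2 a3 ha1 ha2 ha3 hsum
end

section
/- Let A, C, a3 be real numbers with 0 ≤ A ≤ C, a3 ≥ 0, and (5/4)·A + C + a3 = 1. Then 2·A + 2·C + 2·√(A² + (32/27)·a3) ≤ 8/3. -/
/-!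
Eliminating `C = 1 - (5/4) A - a₃`, the claim becomes `√(A² + (32/27) a₃) ≤ 1/3 + A/4 + a₃`
on the triangle `A, a₃ ≥ 0`, `(9/4) A + a₃ ≤ 1` (the constraint `A ≤ C`). With the slack
`s = 1 - (9/4) A - a₃`, the squared bound is the identity
`81 ((1/3 + A/4 + a₃)² - A² - (32/27) a₃) = 54 A s + (3 s - 4 a₃)² + 32 a₃²`,
with equality exactly at `A = C = 4/9`, `a₃ = 0`.
-/

namespace BoundaryCase

theorem sq_add_le_sq_of_slack {A a : ℝ} (hA : 0 ≤ A) (hs : 0 ≤ 1 - 9 / 4 * A - a) :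
    A ^ 2 + 32 / 27 * a ≤ (1 / 3 + A / 4 + a) ^ 2 := by
  set s := 1 - 9 / 4 * A - a with hs_def
  have identity : 81 * ((1 / 3 + A / 4 + a) ^ 2 - (A ^ 2 + 32 / 27 * a)) =
      54 * A * s + (3 * s - 4 * a) ^ 2 + 32 * a ^ 2 := by
    rw [hs_def]; ring
  have : 0 ≤ 54 * A * s + (3 * s - 4 * a) ^ 2 + 32 * a ^ 2 := by positivity
  linarith

theorem sqrt_sq_add_le_of_slack {A a : ℝ} (hA : 0 ≤ A) (ha : 0 ≤ a)
    (hs : 0 ≤ 1 - 9 / 4 * A - a) :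
    Real.sqrt (A ^ 2 + 32 / 27 * a) ≤ 1 / 3 + A / 4 + a :=
  Real.sqrt_le_iff.mpr ⟨by positivity, sq_add_le_sq_of_slack hA hs⟩

end BoundaryCase

/-- The boundary-case inequality in the case `A = B`, `a1 = a2 = 0`. -/
theorem stmt_18 (A C a3 : ℝ) (hA : 0 ≤ A) (hAC : A ≤ C) (ha3 : 0 ≤ a3)
    (hsum : (5 / 4) * A + C + a3 = 1) :
    2 * A + 2 * C + 2 * Real.sqrt (A ^ 2 + (32 / 27) * a3) ≤ 8 / 3 := by
  have hslack : 0 ≤ 1 - 9 / 4 * A - a3 := by linarith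
  have := BoundaryCase.sqrt_sq_add_le_of_slack hA ha3 hslack
  linarith
end

section
/- Let A, C, a2 be real numbers with 0 ≤ A ≤ C, a2 ≥ 0, and (7/12)·A + (5/3)·C + a2 = 1. Then A + 3·C + √(A² + (32/27)·a2) + √(C² + (32/27)·a2) ≤ 8/3. -/
/-!
By concavity of the square root (Jensen), `√x + √y ≤ √(2 (x + y))`, so it suffices that
`2 (A² + C²) + (128/27) a2 ≤ (8/3 - A - 3C)²`. After eliminating `a2` this is a quadratic
inequality on the triangle `0 ≤ A ≤ C`, `7A + 20C ≤ 12`: writing `A = C - d`, 81 times the slack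
is `12 (9C - 4)² + d (208 - 324C - 81d)`, which vanishes at `A = C = 4/9`.
-/

theorem Real.sqrt_add_sqrt_le_of_two_mul_add_le_sq {x y z : ℝ} (hx : 0 ≤ x) (hy : 0 ≤ y)
    (hz : 0 ≤ z) (h : 2 * (x + y) ≤ z ^ 2) : √x + √y ≤ z := by
  have hsq : (√x + √y) ^ 2 ≤ z ^ 2 := by
    nlinarith [Real.sq_sqrt hx, Real.sq_sqrt hy, sq_nonneg (√x - √y)]
  exact abs_le_of_sq_le_sq' hsq hz |>.2

lemma two_mul_radicands_le_sq {A C a2 : ℝ} (hA : 0 ≤ A) (hAC : A ≤ C) (ha2 : 0 ≤ a2)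
    (hsum : (7 / 12) * A + (5 / 3) * C + a2 = 1) :
    2 * ((A ^ 2 + (32 / 27) * a2) + (C ^ 2 + (32 / 27) * a2)) ≤ (8 / 3 - A - 3 * C) ^ 2 := by
  obtain rfl : a2 = 1 - (7 / 12) * A - (5 / 3) * C := by linarith
  nlinarith [sq_nonneg (9 * C - 4), mul_nonneg (sub_nonneg.2 hAC) ha2,
    mul_nonneg hA (sub_nonneg.2 hAC)]

/-- The boundary-case inequality in the case `B = C`, `a1 = a3 = 0`. -/
theorem stmt_19 (A C a2 : ℝ) (hA : 0 ≤ A) (hAC : A ≤ C) (ha2 : 0 ≤ a2)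
    (hsum : (7 / 12) * A + (5 / 3) * C + a2 = 1) :
    A + 3 * C + Real.sqrt (A ^ 2 + (32 / 27) * a2) +
      Real.sqrt (C ^ 2 + (32 / 27) * a2) ≤ 8 / 3 := by
  have hsqrt := Real.sqrt_add_sqrt_le_of_two_mul_add_le_sq (by positivity) (by positivity)
    (by linarith) (two_mul_radicands_le_sq hA hAC ha2 hsum)
  linarith
end
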